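/- For b in the forward light cone L⁺_{n+1} and the Hessian metric g of the Lorentz cone barrier (with √det g = exp F), the Laplace–Beltrami operator applied to log(bᵀx) is constant: Δ_g log(bᵀx) = (n−1)/(n+1) on the interior of the Lorentz cone. -/

import Mathlib

open Real Matrix

/-- The Lorentzian matrix `A = diag(1, -1, …, -1)` on `ℝ^{n+1}`. -/
def lorentzA (n : ℕ) : Matrix (Fin (n + 1)) (Fin (n + 1)) ℝ :=
  Matrix.diagonal fun i => if i = 0 then 1 else -1

/-- The Lorentz quadratic form `xᵀAx`. -/
def lorentzQ (n : ℕ) (x : Fin (n + 1) → ℝ) : ℝ :=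
  x ⬝ᵥ (lorentzA n).mulVec x

/-- The canonical barrier of the Lorentz cone. -/
noncomputable def lorentzF (n : ℕ) (x : Fin (n + 1) → ℝ) : ℝ :=
  -(((n : ℝ) + 1) / 2) * Real.log (lorentzQ n x) + (((n : ℝ) + 1) / 2) * Real.log ((n : ℝ) + 1)

/-- The Hessian metric of the Lorentz barrier, in explicit form. -/
noncomputable def lorentzG (n : ℕ) (x : Fin (n + 1) → ℝ) : Matrix (Fin (n + 1)) (Fin (n + 1)) ℝ :=
  Matrix.of fun i j =>
    -(((n : ℝ) + 1) / lorentzQ n x) *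
      (lorentzA n i j -
        2 * ((lorentzA n).mulVec x i) * ((lorentzA n).mulVec x j) / lorentzQ n x)

/-- The claimed inverse metric `gⁱʲ = -(1/(n+1))((xᵀAx)Bⁱʲ - 2xⁱxʲ)` (with `B = A⁻¹ = A`). -/
noncomputable def lorentzGinv (n : ℕ) (x : Fin (n + 1) → ℝ) :
    Matrix (Fin (n + 1)) (Fin (n + 1)) ℝ :=
  Matrix.of fun i j => -(1 / ((n : ℝ) + 1)) * (lorentzQ n x * lorentzA n i j - 2 * x i * x j)

/-- The Laplace–Beltrami operator of the Lorentz Hessian metric (with `√det g = exp F`)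
applied to a function `f`, in coordinates. -/
noncomputable def lorentzLaplacian (n : ℕ) (f : (Fin (n + 1) → ℝ) → ℝ)
    (x : Fin (n + 1) → ℝ) : ℝ :=
  (Real.exp (lorentzF n x))⁻¹ *
    ∑ i, fderiv ℝ
      (fun y => Real.exp (lorentzF n y) *
        ∑ j, lorentzGinv n y i j * fderiv ℝ f y (Pi.single j 1))
      x (Pi.single i 1)

/-! ### Auxiliary lemmas -/

noncomputable def lorProj (n : ℕ) (i : Fin (n+1)) : (Fin (n+1) → ℝ) →L[ℝ] ℝ :=
  ContinuousLinearMap.proj i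

lemma lorProj_apply (n : ℕ) (i : Fin (n+1)) (v : Fin (n+1) → ℝ) : lorProj n i v = v i := rfl

lemma lorProj_single (n : ℕ) (i : Fin (n+1)) : lorProj n i (Pi.single i 1) = 1 := by
  rw [lorProj_apply, Pi.single_eq_same]

noncomputable def lorLQ (n : ℕ) (x : Fin (n+1) → ℝ) : (Fin (n+1) → ℝ) →L[ℝ] ℝ :=
  ∑ i, (2 * (if i = 0 then (1:ℝ) else -1) * x i) • lorProj n i

noncomputable def lorLp (n : ℕ) (b : Fin (n+1) → ℝ) : (Fin (n+1) → ℝ) →L[ℝ] ℝ :=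
  ∑ i, b i • lorProj n i

lemma lorLQ_apply (n : ℕ) (x : Fin (n+1) → ℝ) (j : Fin (n+1)) :
    lorLQ n x (Pi.single j 1) = 2 * (if j = 0 then (1:ℝ) else -1) * x j := by
  rw [lorLQ, ContinuousLinearMap.sum_apply]
  rw [Finset.sum_eq_single j]
  · split_ifs <;> simp [lorProj_apply]
  · intro i _ hij
    split_ifs <;> simp [lorProj_apply, Pi.single_apply, hij.symm]
  · simp

lemma lorLp_apply (n : ℕ) (b : Fin (n+1) → ℝ) (j : Fin (n+1)) :
    lorLp n b (Pi.single j 1) = b j := by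
  rw [lorLp, ContinuousLinearMap.sum_apply]
  rw [Finset.sum_eq_single j]
  · simp [lorProj_apply]
  · intro i _ hij
    simp [lorProj_apply, Pi.single_apply, hij.symm]
  · simp

lemma lorentzQ_eq (n : ℕ) (x : Fin (n+1) → ℝ) :
    lorentzQ n x = ∑ i, (if i = 0 then (1:ℝ) else -1) * x i ^ 2 := by
  simp only [lorentzQ, lorentzA, dotProduct, mulVec_diagonal]
  exact Finset.sum_congr rfl fun i _ => by ring

lemma hasFDerivAt_lorentzQ (n : ℕ) (x : Fin (n+1) → ℝ) :
    HasFDerivAt (lorentzQ n) (lorLQ n x) x := by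
  have h : lorentzQ n = fun y => ∑ i, (if i = 0 then (1:ℝ) else -1) * (y i * y i) := by
    funext y; rw [lorentzQ_eq]; exact Finset.sum_congr rfl fun i _ => by ring
  rw [h, lorLQ]
  apply HasFDerivAt.fun_sum
  intro i _
  have h1 : HasFDerivAt (fun y : Fin (n+1) → ℝ => y i) (lorProj n i) x :=
    (lorProj n i).hasFDerivAt
  have h2 := (h1.fun_mul h1).const_mul (if i = 0 then (1:ℝ) else -1)
  refine h2.congr_fderiv ?_
  ext v
  split_ifs <;> simp [lorProj_apply] <;> ring

lemma hasFDerivAt_dot (n : ℕ) (b x : Fin (n+1) → ℝ) :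
    HasFDerivAt (fun y : Fin (n+1) → ℝ => b ⬝ᵥ y) (lorLp n b) x := by
  have h : (fun y : Fin (n+1) → ℝ => b ⬝ᵥ y) = fun y => ∑ i, b i * y i := by
    funext y; simp [dotProduct]
  rw [h, lorLp]
  apply HasFDerivAt.fun_sum
  intro i _
  exact ((lorProj n i).hasFDerivAt).const_mul (b i)

lemma lorentzQ_split (n : ℕ) (x : Fin (n+1) → ℝ) :
    lorentzQ n x = x 0 ^ 2 - ∑ i : Fin n, x i.succ ^ 2 := by
  rw [lorentzQ_eq, Fin.sum_univ_succ]
  have h2 : ∑ i : Fin n, (if i.succ = (0 : Fin (n+1)) then (1:ℝ) else -1) * x i.succ ^ 2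
      = ∑ i : Fin n, -(x i.succ ^ 2) := by
    refine Finset.sum_congr rfl fun i _ => ?_
    rw [if_neg (Fin.succ_ne_zero i)]; ring
  rw [h2, Finset.sum_neg_distrib]
  norm_num
  ring

lemma lor_dot_pos (n : ℕ) (b : Fin (n + 1) → ℝ) (hb0 : 0 < b 0)
    (hbnull : b ⬝ᵥ (lorentzA n).mulVec b = 0) (x : Fin (n + 1) → ℝ)
    (hx0 : 0 < x 0) (hQ : 0 < lorentzQ n x) : 0 < b ⬝ᵥ x := by
  have hb : b 0 ^ 2 = ∑ i : Fin n, b i.succ ^ 2 := by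
    have h := (lorentzQ_split n b).symm.trans hbnull
    linarith
  have hx : ∑ i : Fin n, x i.succ ^ 2 < x 0 ^ 2 := by
    have h := lorentzQ_split n x
    nlinarith
  have hcs := Finset.sum_mul_sq_le_sq_mul_sq Finset.univ (fun i : Fin n => b i.succ)
    (fun i : Fin n => x i.succ)
  have hdot : b ⬝ᵥ x = b 0 * x 0 + ∑ i : Fin n, b i.succ * x i.succ := by
    simp [dotProduct, Fin.sum_univ_succ]
  have h1 : (∑ i : Fin n, b i.succ * x i.succ) ^ 2 < (b 0 * x 0) ^ 2 := by
    calc (∑ i : Fin n, b i.succ * x i.succ) ^ 2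
        ≤ (∑ i : Fin n, b i.succ ^ 2) * ∑ i : Fin n, x i.succ ^ 2 := hcs
      _ = b 0 ^ 2 * ∑ i : Fin n, x i.succ ^ 2 := by rw [hb]
      _ < b 0 ^ 2 * x 0 ^ 2 := by
          exact mul_lt_mul_of_pos_left hx (pow_pos hb0 2)
      _ = (b 0 * x 0) ^ 2 := by ring
  rw [hdot]
  nlinarith [h1, mul_pos hb0 hx0]

/-- `Δ_g log(bᵀx) = (n-1)/(n+1)` for `b` in the forward light cone. -/
theorem lorentz_laplacian_log (n : ℕ) (b : Fin (n + 1) → ℝ)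
    (hb0 : 0 < b 0) (hbnull : b ⬝ᵥ (lorentzA n).mulVec b = 0) :
    ∀ x : Fin (n + 1) → ℝ, 0 < x 0 → 0 < lorentzQ n x →
      lorentzLaplacian n (fun y => Real.log (b ⬝ᵥ y)) x = ((n : ℝ) - 1) / ((n : ℝ) + 1) := by
  intro x hx0 hQpos
  have hPpos : 0 < b ⬝ᵥ x := lor_dot_pos n b hb0 hbnull x hx0 hQpos
  have hPne : b ⬝ᵥ x ≠ 0 := ne_of_gt hPpos
  have hQne : lorentzQ n x ≠ 0 := ne_of_gt hQpos
  have hn1 : ((n:ℝ) + 1) ≠ 0 := by positivity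
  have hcontp : Continuous fun y : Fin (n+1) → ℝ => b ⬝ᵥ y :=
    continuous_iff_continuousAt.mpr fun y => (hasFDerivAt_dot n b y).continuousAt
  have hcontQ : Continuous (lorentzQ n) :=
    continuous_iff_continuousAt.mpr fun y => (hasFDerivAt_lorentzQ n y).continuousAt
  have hmem : {y : Fin (n+1) → ℝ | 0 < b ⬝ᵥ y ∧ 0 < lorentzQ n y} ∈ nhds x :=
    ((isOpen_lt continuous_const hcontp).and (isOpen_lt continuous_const hcontQ)).mem_nhds
      ⟨hPpos, hQpos⟩
  have heq : ∀ i : Fin (n+1),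
      (fun y => Real.exp (lorentzF n y) *
        ∑ j, lorentzGinv n y i j *
          fderiv ℝ (fun z : Fin (n+1) → ℝ => Real.log (b ⬝ᵥ z)) y (Pi.single j 1))
      =ᶠ[nhds x] (fun y => Real.exp (lorentzF n y) *
        (-(1/((n:ℝ)+1)) * (lorentzQ n y * ((if i = 0 then (1:ℝ) else -1) * b i)
          - 2 * y i * (b ⬝ᵥ y)) * (b ⬝ᵥ y)⁻¹)) := by
    intro i
    filter_upwards [hmem] with y hy
    obtain ⟨hpy, hqy⟩ := hy
    have hpyne : b ⬝ᵥ y ≠ 0 := ne_of_gt hpy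
    have hfd : fderiv ℝ (fun z : Fin (n+1) → ℝ => Real.log (b ⬝ᵥ z)) y
        = (b ⬝ᵥ y)⁻¹ • lorLp n b := ((hasFDerivAt_dot n b y).log hpyne).fderiv
    simp only [hfd, ContinuousLinearMap.smul_apply, lorLp_apply, smul_eq_mul]
    congr 1
    have hterm : ∀ j : Fin (n+1), lorentzGinv n y i j * ((b ⬝ᵥ y)⁻¹ * b j)
        = (-(1/((n:ℝ)+1)) * lorentzQ n y * (b ⬝ᵥ y)⁻¹) * (lorentzA n i j * b j)
          + ((2/((n:ℝ)+1)) * y i * (b ⬝ᵥ y)⁻¹) * (y j * b j) := by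
      intro j
      simp only [lorentzGinv, Matrix.of_apply]
      ring
    rw [Finset.sum_congr rfl fun j _ => hterm j, Finset.sum_add_distrib,
      ← Finset.mul_sum, ← Finset.mul_sum]
    have h1 : ∑ j, lorentzA n i j * b j = (if i = 0 then (1:ℝ) else -1) * b i := by
      simp [lorentzA, Matrix.diagonal_apply, ite_mul, Finset.sum_ite_eq]
    have h2 : ∑ j, y j * b j = b ⬝ᵥ y := by
      simp [dotProduct, mul_comm]
    rw [h1, h2]
    by_cases hi : i = 0 <;> simp only [hi, if_true, if_false] <;> field_simp <;> ring
  have hval : ∀ i : Fin (n+1),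
      fderiv ℝ (fun y => Real.exp (lorentzF n y) *
        ∑ j, lorentzGinv n y i j *
          fderiv ℝ (fun z : Fin (n+1) → ℝ => Real.log (b ⬝ᵥ z)) y (Pi.single j 1))
        x (Pi.single i 1)
      = Real.exp (lorentzF n x) * -(1/((n:ℝ)+1)) *
          ( ((2:ℝ) - ((n:ℝ)+1)) / (b ⬝ᵥ x) * (b i * x i) + (-2)
            + (- lorentzQ n x / (b ⬝ᵥ x)^2) * ((if i = 0 then (1:ℝ) else -1) * b i ^ 2)
            + (2 * ((n:ℝ)+1) / lorentzQ n x) * ((if i = 0 then (1:ℝ) else -1) * x i ^ 2) ) := by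
    intro i
    rw [(heq i).fderiv_eq]
    have hQx := hasFDerivAt_lorentzQ n x
    have hpx := hasFDerivAt_dot n b x
    have hproj : HasFDerivAt (fun y : Fin (n+1) → ℝ => y i) (lorProj n i) x :=
      (lorProj n i).hasFDerivAt
    have hFx : HasFDerivAt (lorentzF n)
        ((-(((n:ℝ)+1)/2) * (lorentzQ n x)⁻¹) • lorLQ n x) x := by
      have hfun : lorentzF n = fun y =>
          -(((n:ℝ)+1)/2) * Real.log (lorentzQ n y) + (((n:ℝ)+1)/2) * Real.log ((n:ℝ)+1) := rfl
      rw [hfun]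
      have h := ((hQx.log hQne).const_mul (-(((n:ℝ)+1)/2))).add_const
        ((((n:ℝ)+1)/2) * Real.log ((n:ℝ)+1))
      rw [mul_smul]
      exact h
    have hE := hFx.exp
    have hinv : HasFDerivAt (fun y : Fin (n+1) → ℝ => (b ⬝ᵥ y)⁻¹)
        ((-((b ⬝ᵥ x) ^ 2)⁻¹) • lorLp n b) x :=
      (hasDerivAt_inv hPne).comp_hasFDerivAt x hpx
    have hN := (hQx.mul_const ((if i = 0 then (1:ℝ) else -1) * b i)).fun_sub
      ((hproj.const_mul (2:ℝ)).fun_mul hpx)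
    have hinner := (hN.const_mul (-(1/((n:ℝ)+1)))).fun_mul hinv
    have hphi := hE.fun_mul hinner
    rw [hphi.fderiv]
    simp only [ContinuousLinearMap.add_apply, ContinuousLinearMap.smul_apply,
      ContinuousLinearMap.sub_apply, smul_eq_mul, lorLQ_apply, lorLp_apply, lorProj_single]
    by_cases hi : i = 0 <;> simp only [hi, if_true, if_false] <;> field_simp <;> ring
  simp only [lorentzLaplacian]
  rw [Finset.sum_congr rfl fun i _ => hval i, ← Finset.mul_sum]
  have hs1 : ∑ i, b i * x i = b ⬝ᵥ x := by simp [dotProduct]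
  have hs3 : ∑ i, (if i = 0 then (1:ℝ) else -1) * b i ^ 2 = 0 :=
    (lorentzQ_eq n b).symm.trans hbnull
  have hs4 : ∑ i, (if i = 0 then (1:ℝ) else -1) * x i ^ 2 = lorentzQ n x :=
    (lorentzQ_eq n x).symm
  rw [Finset.sum_add_distrib, Finset.sum_add_distrib, Finset.sum_add_distrib,
    ← Finset.mul_sum, ← Finset.mul_sum, ← Finset.mul_sum, hs1, hs3, hs4,
    Finset.sum_const, Finset.card_univ, Fintype.card_fin, nsmul_eq_mul]
  push_cast
  field_simp [Real.exp_ne_zero]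
  ring
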